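/- Let f: [0,∞) → ℝ be bounded and uniformly continuous. Then for every x ≥ 1/2 and n ∈ ℕ, |K_n*(f;x) − f(x)| ≤ 2ω(f; δ*_{n,x}), where ω is the modulus of continuity and δ*_{n,x} = sqrt(K_n*((t−x)²;x)). -/

import Mathlib

/-!
`K_n^*(·; x)` is a positive linear functional that preserves constants: it is
`c ∑ₖ Aₖ ∫_{Iₖ} F` with weights `Aₖ = y^k/γ_μ(k) ≥ 0`, intervals `Iₖ` of length `1/n`
and `c = n / e_μ(y) = n / ∑ₖ Aₖ`. Subadditivity of `ω` gives
`|f t - f x| ≤ ω(δ) + ω(δ)/δ² (t - x)²`, and applying the functional yields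
`|K_n^* f - f x| ≤ ω(δ) (1 + K_n^*((t - x)²)/δ²) = 2 ω(δ)` for `δ² = K_n^*((t - x)²)`.
This `δ` is positive because the `k = 0` term integrates the square of a nonconstant affine
function. All the series converge since `γ_μ(k) ≥ k!`.
-/

noncomputable section

/-- θ_k = 0 if k even, 1 if k odd. -/
def theta (k : ℕ) : ℝ := if Even k then 0 else 1

/-- Dunkl coefficients γ_μ(n). -/
def gammaD (mu : ℝ) (n : ℕ) : ℝ :=
  if Even n then
    2 ^ n * (Nat.factorial (n / 2)) * Real.Gamma ((n / 2 : ℕ) + mu + 1 / 2) / Real.Gamma (mu + 1 / 2)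
  else
    2 ^ n * (Nat.factorial (n / 2)) * Real.Gamma ((n / 2 : ℕ) + mu + 3 / 2) / Real.Gamma (mu + 1 / 2)

/-- Dunkl exponential e_μ(x) = Σ xⁿ/γ_μ(n). -/
def eD (mu x : ℝ) : ℝ := ∑' n : ℕ, x ^ n / gammaD mu n

/-- r_n(x) = x - 1/(2n). -/
def rn (n : ℕ) (x : ℝ) : ℝ := x - 1 / (2 * n)

/-- Modified Dunkl Szász–Mirakjan–Kantorovich operator K_n. -/
def Kn (mu : ℝ) (n : ℕ) (f : ℝ → ℝ) (x : ℝ) : ℝ :=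
  (n / eD mu (n * rn n x)) * ∑' k : ℕ, (n * rn n x) ^ k / gammaD mu k *
    ∫ t in (((k : ℝ) + 2 * mu * theta k) / n)..(((k : ℝ) + 1 + 2 * mu * theta k) / n), f t

/-- Stancu-type modified Dunkl Szász–Kantorovich operator K_n^*. -/
def KnStar (mu a b : ℝ) (n : ℕ) (f : ℝ → ℝ) (x : ℝ) : ℝ :=
  (n / eD mu (n * rn n x)) * ∑' k : ℕ, (n * rn n x) ^ k / gammaD mu k *
    ∫ t in (((k : ℝ) + 2 * mu * theta k) / n)..(((k : ℝ) + 1 + 2 * mu * theta k) / n),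
      f ((n * t + a) / (n + b))

/-- Dunkl Szász–Kantorovich–Stancu operator T_n^*. -/
def TnStar (mu a b : ℝ) (n : ℕ) (f : ℝ → ℝ) (x : ℝ) : ℝ :=
  (n / eD mu (n * x)) * ∑' k : ℕ, (n * x) ^ k / gammaD mu k *
    ∫ t in (((k : ℝ) + 2 * mu * theta k) / n)..(((k : ℝ) + 1 + 2 * mu * theta k) / n),
      f ((n * t + a) / (n + b))

/-- Modulus of continuity of f on [0,∞). -/
def modCont (f : ℝ → ℝ) (d : ℝ) : ℝ :=
  sSup {y | ∃ t s : ℝ, 0 ≤ t ∧ 0 ≤ s ∧ |t - s| ≤ d ∧ y = |f t - f s|}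

open Set MeasureTheory

section DunklCoefficients

variable {mu : ℝ}

lemma theta_nonneg (k : ℕ) : 0 ≤ theta k := by
  unfold theta; split <;> norm_num

lemma theta_le_one (k : ℕ) : theta k ≤ 1 := by
  unfold theta; split <;> norm_num

lemma gammaD_pos (hmu : 0 ≤ mu) (k : ℕ) : 0 < gammaD mu k := by
  have : 0 < Real.Gamma (mu + 1 / 2) := Real.Gamma_pos_of_pos (by linarith)
  unfold gammaD
  split
  · have : 0 < Real.Gamma ((k / 2 : ℕ) + mu + 1 / 2) := Real.Gamma_pos_of_pos (by positivity)
    positivity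
  · have : 0 < Real.Gamma ((k / 2 : ℕ) + mu + 3 / 2) := Real.Gamma_pos_of_pos (by positivity)
    positivity

lemma gammaD_zero (hmu : 0 ≤ mu) : gammaD mu 0 = 1 := by
  have : Real.Gamma (mu + 2⁻¹) ≠ 0 := (Real.Gamma_pos_of_pos (by linarith)).ne'
  simp [gammaD, this]

lemma gammaD_succ (hmu : 0 ≤ mu) (k : ℕ) :
    gammaD mu (k + 1) = ((k : ℝ) + 1 + 2 * mu * theta (k + 1)) * gammaD mu k := by
  rcases Nat.even_or_odd k with ⟨m, rfl⟩ | ⟨m, rfl⟩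
  · have hodd : ¬ Even (m + m + 1) := Nat.not_even_iff_odd.mpr ⟨m, by ring⟩
    have hΓ : Real.Gamma ((m : ℝ) + mu + 3 / 2)
        = ((m : ℝ) + mu + 1 / 2) * Real.Gamma ((m : ℝ) + mu + 1 / 2) := by
      rw [← Real.Gamma_add_one (by positivity)]; ring_nf
    simp only [gammaD, theta, if_neg hodd, if_pos (Even.add_self m),
      show (m + m + 1) / 2 = m by omega, show (m + m) / 2 = m by omega, hΓ]
    push_cast; ring
  · have heven : Even (2 * m + 1 + 1) := ⟨m + 1, by ring⟩
    have hodd : ¬ Even (2 * m + 1) := Nat.not_even_iff_odd.mpr ⟨m, rfl⟩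
    simp only [gammaD, theta, if_neg hodd, if_pos heven,
      show (2 * m + 1 + 1) / 2 = m + 1 by omega, show (2 * m + 1) / 2 = m by omega,
      Nat.factorial_succ]
    push_cast; ring_nf

lemma factorial_le_gammaD (hmu : 0 ≤ mu) (k : ℕ) : (k.factorial : ℝ) ≤ gammaD mu k := by
  induction k with
  | zero => simp [gammaD_zero hmu]
  | succ k ih =>
    rw [gammaD_succ hmu, Nat.factorial_succ]
    push_cast
    have := mul_nonneg hmu (theta_nonneg (k + 1))
    exact mul_le_mul (by linarith) ih (by positivity) (by linarith)

lemma summable_pow_div_gammaD (hmu : 0 ≤ mu) {y : ℝ} (hy : 0 ≤ y) :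
    Summable fun k => y ^ k / gammaD mu k :=
  (Real.summable_pow_div_factorial y).of_nonneg_of_le
    (fun k => div_nonneg (pow_nonneg hy k) (gammaD_pos hmu k).le)
    (fun k => div_le_div_of_nonneg_left (pow_nonneg hy k) (by positivity)
      (factorial_le_gammaD hmu k))

lemma one_le_eD (hmu : 0 ≤ mu) {y : ℝ} (hy : 0 ≤ y) : 1 ≤ eD mu y := by
  unfold eD
  have := (summable_pow_div_gammaD hmu hy).le_tsum 0
    (fun k _ => div_nonneg (pow_nonneg hy k) (gammaD_pos hmu k).le)
  simpa [gammaD_zero hmu] using this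

end DunklCoefficients

section ModulusOfContinuity

variable {f : ℝ → ℝ}

lemma modCont_bddAbove (hf : ∃ C, ∀ t, 0 ≤ t → |f t| ≤ C) (d : ℝ) :
    BddAbove {y | ∃ t s : ℝ, 0 ≤ t ∧ 0 ≤ s ∧ |t - s| ≤ d ∧ y = |f t - f s|} := by
  obtain ⟨C, hC⟩ := hf
  refine ⟨C + C, ?_⟩
  rintro y ⟨t, s, ht, hs, _, rfl⟩
  exact (abs_sub _ _).trans (add_le_add (hC t ht) (hC s hs))

lemma abs_sub_le_modCont (hf : ∃ C, ∀ t, 0 ≤ t → |f t| ≤ C) {d t s : ℝ} (ht : 0 ≤ t)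
    (hs : 0 ≤ s) (hts : |t - s| ≤ d) : |f t - f s| ≤ modCont f d :=
  le_csSup (modCont_bddAbove hf d) ⟨t, s, ht, hs, hts, rfl⟩

lemma modCont_nonneg (hf : ∃ C, ∀ t, 0 ≤ t → |f t| ≤ C) {d : ℝ} (hd : 0 ≤ d) :
    0 ≤ modCont f d := by
  simpa using abs_sub_le_modCont hf (le_refl 0) (le_refl 0) (by simpa using hd)

/-- Split `[s, t]` at the point `p` with `t - p = (t - s) / (m + 1)`. -/
lemma abs_sub_le_nat_mul_modCont (hf : ∃ C, ∀ t, 0 ≤ t → |f t| ≤ C) {d : ℝ} (m : ℕ) :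
    ∀ {t s : ℝ}, 0 ≤ t → 0 ≤ s → |t - s| ≤ m * d → |f t - f s| ≤ m * modCont f d := by
  induction m with
  | zero =>
    intro t s _ _ hts
    obtain rfl : t = s := by simpa [sub_eq_zero] using hts
    simp
  | succ m ih =>
    intro t s ht hs hts
    have hm : (0 : ℝ) < m + 1 := by positivity
    set p := (m * t + s) / (m + 1)
    have hp : 0 ≤ p := by positivity
    have htp : t - p = (t - s) / (m + 1) := by simp only [p]; field_simp; ring
    have hps : p - s = m * ((t - s) / (m + 1)) := by simp only [p]; field_simp; ring
    have hstep : |t - s| / (m + 1) ≤ d := by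
      rw [div_le_iff₀ hm]; push_cast at hts; linarith
    calc |f t - f s| ≤ |f t - f p| + |f p - f s| := abs_sub_le _ _ _
      _ ≤ modCont f d + m * modCont f d := by
        gcongr
        · exact abs_sub_le_modCont hf ht hp (by rwa [htp, abs_div, abs_of_pos hm])
        · refine ih hp hs ?_
          rw [hps, abs_mul, Nat.abs_cast, abs_div, abs_of_pos hm]
          gcongr
      _ = (m + 1 : ℕ) * modCont f d := by push_cast; ring

lemma abs_sub_le_one_add_sq_div_sq_mul_modCont (hf : ∃ C, ∀ t, 0 ≤ t → |f t| ≤ C)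
    {δ t s : ℝ} (hδ : 0 < δ) (ht : 0 ≤ t) (hs : 0 ≤ s) :
    |f t - f s| ≤ (1 + (t - s) ^ 2 / δ ^ 2) * modCont f δ := by
  set r := |t - s| / δ
  have hr : 0 ≤ r := by positivity
  have hr2 : (t - s) ^ 2 / δ ^ 2 = r ^ 2 := by rw [div_pow, sq_abs]
  have hfloor := Nat.lt_floor_add_one (r ^ 2)
  have hmδ : |t - s| ≤ (⌊r ^ 2⌋₊ + 1 : ℕ) * δ := by
    rw [← div_le_iff₀ hδ]; push_cast; nlinarith
  calc |f t - f s| ≤ (⌊r ^ 2⌋₊ + 1 : ℕ) * modCont f δ :=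
        abs_sub_le_nat_mul_modCont hf _ ht hs hmδ
    _ ≤ (1 + (t - s) ^ 2 / δ ^ 2) * modCont f δ := by
        gcongr
        · exact modCont_nonneg hf hδ.le
        · rw [hr2]; push_cast; linarith [Nat.floor_le (sq_nonneg r)]

end ModulusOfContinuity

section KantorovichSums

variable {A l u : ℕ → ℝ}

lemma abs_tsum_mul_integral_sub_le {F B : ℝ → ℝ} {c : ℝ} (hA : ∀ k, 0 ≤ A k)
    (hlu : ∀ k, l k ≤ u k) (hF : ∀ k, IntervalIntegrable F volume (l k) (u k))
    (hB : ∀ k, IntervalIntegrable B volume (l k) (u k))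
    (hFB : ∀ k, ∀ t ∈ Icc (l k) (u k), |F t - c| ≤ B t)
    (hAsum : Summable fun k => A k * (u k - l k))
    (hBsum : Summable fun k => A k * ∫ t in l k..u k, B t) :
    |∑' k, A k * (∫ t in l k..u k, F t) - c * ∑' k, A k * (u k - l k)|
      ≤ ∑' k, A k * ∫ t in l k..u k, B t := by
  have hterm : ∀ k, ‖A k * (∫ t in l k..u k, F t) - c * (A k * (u k - l k))‖
      ≤ A k * ∫ t in l k..u k, B t := by
    intro k
    have hint : ∫ t in l k..u k, (F t - c) = (∫ t in l k..u k, F t) - c * (u k - l k) := by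
      rw [intervalIntegral.integral_sub (hF k) intervalIntegrable_const,
        intervalIntegral.integral_const, smul_eq_mul, mul_comm]
    rw [show A k * (∫ t in l k..u k, F t) - c * (A k * (u k - l k))
        = A k * ∫ t in l k..u k, (F t - c) by rw [hint]; ring,
      norm_mul, Real.norm_of_nonneg (hA k)]
    exact mul_le_mul_of_nonneg_left (intervalIntegral.norm_integral_le_of_norm_le (hlu k)
      (ae_of_all _ fun t ht => hFB k t (Ioc_subset_Icc_self ht)) (hB k)) (hA k)
  have hdiff := Summable.of_norm_bounded hBsum hterm
  have hFsum : Summable fun k => A k * ∫ t in l k..u k, F t := by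
    simpa using hdiff.add (hAsum.mul_left c)
  rw [← tsum_mul_left, ← hFsum.tsum_sub (hAsum.mul_left c)]
  exact tsum_of_norm_bounded hBsum.hasSum hterm

/-- Popoviciu–Shisha–Mond inequality for the positive functional
`L F = c ∑ₖ Aₖ ∫_{lₖ}^{uₖ} F` with `L 1 = 1`. -/
lemma abs_sub_le_of_tsum_mul_integral {F G : ℝ → ℝ} {c F₀ ω K : ℝ} (hc : 0 ≤ c)
    (hA : ∀ k, 0 ≤ A k) (hlu : ∀ k, l k ≤ u k)
    (hF : ∀ k, IntervalIntegrable F volume (l k) (u k))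
    (hG : ∀ k, IntervalIntegrable G volume (l k) (u k))
    (hFG : ∀ k, ∀ t ∈ Icc (l k) (u k), |F t - F₀| ≤ ω + K * G t)
    (hAsum : Summable fun k => A k * (u k - l k)) (hnorm : c * ∑' k, A k * (u k - l k) = 1)
    (hGsum : Summable fun k => A k * ∫ t in l k..u k, G t) :
    |c * ∑' k, A k * (∫ t in l k..u k, F t) - F₀|
      ≤ ω + K * (c * ∑' k, A k * ∫ t in l k..u k, G t) := by
  have hB : ∀ k, ∫ t in l k..u k, (ω + K * G t)
      = ω * (u k - l k) + K * ∫ t in l k..u k, G t := by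
    intro k
    rw [intervalIntegral.integral_add intervalIntegrable_const ((hG k).const_mul K),
      intervalIntegral.integral_const, intervalIntegral.integral_const_mul, smul_eq_mul, mul_comm]
  have hBsum : Summable fun k => A k * ∫ t in l k..u k, (ω + K * G t) := by
    simp_rw [hB]
    exact ((hAsum.mul_left ω).add (hGsum.mul_left K)).congr fun k => by ring
  have key := abs_tsum_mul_integral_sub_le hA hlu hF
    (fun k => intervalIntegrable_const.add ((hG k).const_mul K)) hFG hAsum hBsum
  have hsplit : ∑' k, A k * ∫ t in l k..u k, (ω + K * G t)
      = ω * ∑' k, A k * (u k - l k) + K * ∑' k, A k * ∫ t in l k..u k, G t := by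
    simp_rw [hB, mul_add, ← tsum_mul_left]
    rw [← (hAsum.mul_left ω).tsum_add (hGsum.mul_left K)]
    exact tsum_congr fun k => by ring
  calc |c * ∑' k, A k * (∫ t in l k..u k, F t) - F₀|
      = c * |∑' k, A k * (∫ t in l k..u k, F t) - F₀ * ∑' k, A k * (u k - l k)| := by
        rw [← abs_of_nonneg hc, ← abs_mul, abs_of_nonneg hc]
        congr 1
        linear_combination F₀ * hnorm
    _ ≤ c * (ω * ∑' k, A k * (u k - l k) + K * ∑' k, A k * ∫ t in l k..u k, G t) := by
        rw [← hsplit]; exact mul_le_mul_of_nonneg_left key hc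
    _ = ω + K * (c * ∑' k, A k * ∫ t in l k..u k, G t) := by
        linear_combination ω * hnorm

end KantorovichSums

lemma integral_sq_affine_pos {α β l u : ℝ} (hα : 0 < α) (hlu : l < u) :
    0 < ∫ t in l..u, (α * t + β) ^ 2 := by
  rw [intervalIntegral.integral_comp_mul_add (fun t => t ^ 2) hα.ne', integral_pow, smul_eq_mul]
  have : (α * l + β) ^ 3 < (α * u + β) ^ 3 :=
    Odd.strictMono_pow (by decide) (by gcongr)
  have : 0 < α⁻¹ := inv_pos.mpr hα
  push_cast
  nlinarith

section KnStar

variable {mu a b : ℝ} {n : ℕ}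

lemma dunklNode_le (mu : ℝ) (n k : ℕ) :
    ((k : ℝ) + 2 * mu * theta k) / n ≤ ((k : ℝ) + 1 + 2 * mu * theta k) / n := by
  gcongr; linarith

lemma natCast_mul_rn_nonneg (hn : 0 < n) {x : ℝ} (hx : 1 / 2 ≤ x) : 0 ≤ n * rn n x := by
  have : (1 : ℝ) ≤ n := Nat.one_le_cast.mpr hn
  rw [rn, mul_sub, mul_one_div, div_mul_cancel_right₀ (by positivity)]
  nlinarith

lemma intervalIntegrable_comp_stancu (hmu : 0 ≤ mu) (ha : 0 ≤ a) (hb : 0 ≤ b) {F : ℝ → ℝ}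
    (hF : ContinuousOn F (Ici 0)) (k : ℕ) :
    IntervalIntegrable (fun t => F ((n * t + a) / (n + b))) volume
      (((k : ℝ) + 2 * mu * theta k) / n) (((k : ℝ) + 1 + 2 * mu * theta k) / n) := by
  have := theta_nonneg k
  refine ContinuousOn.intervalIntegrable (hF.comp (by fun_prop) fun t ht => ?_)
  rw [uIcc_of_le (dunklNode_le mu n k)] at ht
  have : 0 ≤ t := le_trans (by positivity) ht.1
  exact mem_Ici.mpr (by positivity)

lemma sq_stancu_sub_le (hmu : 0 ≤ mu) (ha : 0 ≤ a) (hb : 0 ≤ b) (hn : 0 < n) {x : ℝ}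
    (hx : 0 ≤ x) {k : ℕ} {t : ℝ}
    (ht : t ∈ Icc (((k : ℝ) + 2 * mu * theta k) / n) (((k : ℝ) + 1 + 2 * mu * theta k) / n)) :
    ((n * t + a) / (n + b) - x) ^ 2 ≤ (1 + 2 * mu + a + x) ^ 2 * 4 ^ k := by
  have hn1 : (1 : ℝ) ≤ n := Nat.one_le_cast.mpr hn
  have hθ0 := theta_nonneg k
  have hθ1 := theta_le_one k
  have ht0 : 0 ≤ t := le_trans (by positivity) ht.1
  have hnt : n * t ≤ k + 1 + 2 * mu := by
    have := ht.2
    rw [le_div_iff₀ (by positivity)] at this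
    nlinarith
  have hg0 : 0 ≤ (n * t + a) / (n + b) := by positivity
  have hg : (n * t + a) / (n + b) ≤ n * t + a :=
    div_le_self (by positivity) (by linarith)
  have hk : (k : ℝ) + 1 ≤ 2 ^ k := by exact_mod_cast Nat.lt_two_pow_self
  rw [show (4 : ℝ) ^ k = (2 ^ k) ^ 2 by rw [← pow_mul, mul_comm, pow_mul]; norm_num, ← mul_pow]
  apply sq_le_sq' <;> nlinarith

lemma summable_mul_integral_sq_stancu (hmu : 0 ≤ mu) (ha : 0 ≤ a) (hb : 0 ≤ b) (hn : 0 < n)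
    {x y : ℝ} (hx : 0 ≤ x) (hy : 0 ≤ y) :
    Summable fun k : ℕ => y ^ k / gammaD mu k *
      ∫ t in (((k : ℝ) + 2 * mu * theta k) / n)..(((k : ℝ) + 1 + 2 * mu * theta k) / n),
        ((n * t + a) / (n + b) - x) ^ 2 := by
  set c := 1 + 2 * mu + a + x
  have hsum := (summable_pow_div_gammaD hmu (by positivity : 0 ≤ 4 * y)).mul_left (c ^ 2 / n)
  refine hsum.of_nonneg_of_le (fun k => ?_) (fun k => ?_)
  all_goals
    have hA : 0 ≤ y ^ k / gammaD mu k := div_nonneg (pow_nonneg hy k) (gammaD_pos hmu k).le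
  · exact mul_nonneg hA (intervalIntegral.integral_nonneg (dunklNode_le mu n k) fun t _ => sq_nonneg _)
  · have hI := intervalIntegral.integral_mono_on (dunklNode_le mu n k)
      (intervalIntegrable_comp_stancu hmu ha hb ((continuous_sub_right x).pow 2).continuousOn k)
      intervalIntegrable_const fun t ht => sq_stancu_sub_le hmu ha hb hn hx ht
    rw [intervalIntegral.integral_const, smul_eq_mul] at hI
    calc y ^ k / gammaD mu k * _ ≤ y ^ k / gammaD mu k * (_ * (c ^ 2 * 4 ^ k)) :=
          mul_le_mul_of_nonneg_left hI hA
      _ = c ^ 2 / n * ((4 * y) ^ k / gammaD mu k) := by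
          rw [mul_pow]; field_simp; ring

lemma KnStar_sq_pos (hmu : 0 ≤ mu) (ha : 0 ≤ a) (hb : 0 ≤ b) (hn : 0 < n) {x : ℝ}
    (hx : 1 / 2 ≤ x) : 0 < KnStar mu a b n (fun t => (t - x) ^ 2) x := by
  have hnR : (0 : ℝ) < n := Nat.cast_pos.mpr hn
  have hy := natCast_mul_rn_nonneg hn hx
  have heD := zero_lt_one.trans_le (one_le_eD hmu hy)
  have hsum := summable_mul_integral_sq_stancu hmu ha hb hn (by linarith : 0 ≤ x) hy
  refine mul_pos (div_pos hnR heD) (hsum.tsum_pos (fun k => ?_) 0 ?_)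
  · exact mul_nonneg (div_nonneg (pow_nonneg hy k) (gammaD_pos hmu k).le)
      (intervalIntegral.integral_nonneg (dunklNode_le mu n k) fun t _ => sq_nonneg _)
  · have hαβ : ∀ t : ℝ, (n * t + a) / (n + b) - x = n / (n + b) * t + (a / (n + b) - x) :=
      fun t => by ring
    have htheta : theta 0 = 0 := by simp [theta]
    simp only [hαβ, gammaD_zero hmu, htheta, Nat.cast_zero, pow_zero, div_one, one_mul, zero_add,
      mul_zero, add_zero, zero_div]
    exact integral_sq_affine_pos (by positivity) (by positivity)

lemma KnStar_abs_sub_le (hmu : 0 ≤ mu) (ha : 0 ≤ a) (hb : 0 ≤ b) (hn : 0 < n) {x : ℝ}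
    (hx : 1 / 2 ≤ x) {f : ℝ → ℝ} (hf : ContinuousOn f (Ici 0)) {ω K : ℝ}
    (hfx : ∀ s, 0 ≤ s → |f s - f x| ≤ ω + K * (s - x) ^ 2) :
    |KnStar mu a b n f x - f x| ≤ ω + K * KnStar mu a b n (fun t => (t - x) ^ 2) x := by
  have hnR : (0 : ℝ) < n := Nat.cast_pos.mpr hn
  have hy := natCast_mul_rn_nonneg hn hx
  have heD := zero_lt_one.trans_le (one_le_eD hmu hy)
  have hwidth : ∀ k : ℕ,
      ((k : ℝ) + 1 + 2 * mu * theta k) / n - ((k : ℝ) + 2 * mu * theta k) / n = 1 / n :=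
    fun k => by ring
  have hAsum : Summable fun k : ℕ => (n * rn n x) ^ k / gammaD mu k *
      (((k : ℝ) + 1 + 2 * mu * theta k) / n - ((k : ℝ) + 2 * mu * theta k) / n) := by
    simp only [hwidth]; exact (summable_pow_div_gammaD hmu hy).mul_right _
  refine abs_sub_le_of_tsum_mul_integral (div_pos hnR heD).le
    (fun k => div_nonneg (pow_nonneg hy k) (gammaD_pos hmu k).le) (dunklNode_le mu n)
    (intervalIntegrable_comp_stancu hmu ha hb hf)
    (intervalIntegrable_comp_stancu hmu ha hb ((continuous_sub_right x).pow 2).continuousOn)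
    (fun k t ht => hfx _ ?_) hAsum ?_
    (summable_mul_integral_sq_stancu hmu ha hb hn (by linarith) hy)
  · have := theta_nonneg k
    have : 0 ≤ t := le_trans (by positivity) ht.1
    positivity
  · simp only [hwidth]
    rw [tsum_mul_right]
    change n / eD mu _ * (eD mu _ * (1 / n)) = 1
    field_simp

end KnStar

theorem KnStar_modCont_estimate (mu a b : ℝ) (hmu : 0 ≤ mu) (ha : 0 ≤ a) (hab : a ≤ b)
    (f : ℝ → ℝ) (hfb : ∃ C : ℝ, ∀ t : ℝ, 0 ≤ t → |f t| ≤ C)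
    (hfu : UniformContinuousOn f (Set.Ici 0))
    (n : ℕ) (hn : 0 < n) (x : ℝ) (hx : 1 / 2 ≤ x) :
    |KnStar mu a b n f x - f x|
      ≤ 2 * modCont f (Real.sqrt (KnStar mu a b n (fun t => (t - x) ^ 2) x)) := by
  have hb : 0 ≤ b := ha.trans hab
  have hK := KnStar_sq_pos hmu ha hb hn hx
  set δ := Real.sqrt (KnStar mu a b n (fun t => (t - x) ^ 2) x)
  have hδ : 0 < δ := Real.sqrt_pos.mpr hK
  have hδsq : δ ^ 2 = KnStar mu a b n (fun t => (t - x) ^ 2) x := Real.sq_sqrt hK.le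
  have hpointwise :
      ∀ s, 0 ≤ s → |f s - f x| ≤ modCont f δ + modCont f δ / δ ^ 2 * (s - x) ^ 2 :=
    fun s hs => (abs_sub_le_one_add_sq_div_sq_mul_modCont hfb hδ hs (by linarith)).trans_eq
      (by ring)
  calc |KnStar mu a b n f x - f x|
      ≤ modCont f δ + modCont f δ / δ ^ 2 * KnStar mu a b n (fun t => (t - x) ^ 2) x :=
        KnStar_abs_sub_le hmu ha hb hn hx hfu.continuousOn hpointwise
    _ = 2 * modCont f δ := by rw [← hδsq]; field_simp; ring
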